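/- arXiv:0803.1387 — 7 statements merged into one kernel-verified Lean document; each statement's English description precedes it below -/
import Mathlib

section
/- Let X be a topological space, T a group acting on X by homeomorphisms, and suppose the system (X,T) is pseudo-minimal, i.e. there is a nonempty open set U such that the orbit of every point of U is dense in X. If x is a point whose orbit is dense and y lies in the omega-limit set of x with the orbit of y also dense, then the omega-limit set of x equals the whole space X (i.e. ω(x) is dense). Equivalently: for x with dense orbit, either ω(x) is dense in X or ω(x) is disjoint from the set of points with dense orbit. -/
open Topology

/-- The full (two-sided) orbit of `x` under the homeomorphism `f`. -/
def Homeomorph.zorbit {X : Type*} [TopologicalSpace X] (f : X ≃ₜ X) (x : X) : Set X :=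
  Set.range fun n : ℤ => (f.toEquiv ^ n) x

/-- The omega-limit set of `x` under the homeomorphism `f`. -/
def Homeomorph.omegaSet {X : Type*} [TopologicalSpace X] (f : X ≃ₜ X) (x : X) : Set X :=
  {y | ∀ V ∈ 𝓝 y, ∀ N : ℕ, ∃ n : ℕ, N ≤ n ∧ (f.toEquiv ^ (n : ℤ)) x ∈ V}

namespace Homeomorph

variable {X : Type*} [TopologicalSpace X]

def toPerm : (X ≃ₜ X) →* Equiv.Perm X where
  toFun f := f.toEquiv
  map_one' := rfl
  map_mul' _ _ := rfl

theorem toEquiv_zpow (f : X ≃ₜ X) (k : ℤ) : f.toEquiv ^ k = (f ^ k).toEquiv :=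
  (map_zpow toPerm f k).symm

theorem continuous_toEquiv_zpow (f : X ≃ₜ X) (k : ℤ) : Continuous (f.toEquiv ^ k) := by
  rw [toEquiv_zpow]
  exact (f ^ k).continuous

theorem zorbit_subset_omegaSet {f : X ≃ₜ X} {x y : X} (hy : y ∈ f.omegaSet x) :
    f.zorbit y ⊆ f.omegaSet x := by
  rintro _ ⟨k, rfl⟩ V hV N
  have hV' : (f.toEquiv ^ k) ⁻¹' V ∈ 𝓝 y :=
    (continuous_toEquiv_zpow f k).continuousAt.preimage_mem_nhds hV
  -- waiting `|k|` extra steps keeps the shifted time `n + k` beyond `N`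
  obtain ⟨n, hNn, hn⟩ := hy _ hV' (N + k.natAbs)
  refine ⟨(n + k).toNat, by omega, ?_⟩
  have hshift : ((n + k).toNat : ℤ) = k + n := by omega
  rwa [hshift, zpow_add, Equiv.Perm.mul_apply]

end Homeomorph

theorem stmt0_general {X : Type*} [TopologicalSpace X] (f : X ≃ₜ X)
    (x y : X) (hy : y ∈ f.omegaSet x)
    (hyd : Dense (f.zorbit y)) : Dense (f.omegaSet x) :=
  hyd.mono (Homeomorph.zorbit_subset_omegaSet hy)

/-- If `(X, f)` is pseudo-minimal, `x` has dense orbit, and `y ∈ ω(x)` also has dense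
orbit, then `ω(x)` is dense (equals the whole space in the compact case). -/
theorem stmt0 {X : Type*} [TopologicalSpace X] (f : X ≃ₜ X)
    (hpm : ∃ U : Set X, IsOpen U ∧ U.Nonempty ∧ ∀ x ∈ U, Dense (f.zorbit x))
    (x y : X) (hx : Dense (f.zorbit x)) (hy : y ∈ f.omegaSet x)
    (hyd : Dense (f.zorbit y)) : Dense (f.omegaSet x) :=
  stmt0_general f x y hy hyd
end

section
/- Let X be a locally compact, perfect, separable metric space and f : X → X a homeomorphism. If there exists a nonempty open set U such that the forward orbit {f^n(x) : n ≥ 0} is dense in X for every x ∈ U (f is positively pseudo-minimal), then X is compact and every orbit of f is dense, i.e. f is minimal. -/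
/-!
Let `D` be the set of points with dense forward orbit. In a perfect `T₁` space removing the
first point of a dense forward orbit leaves it dense, so `D` is forward invariant. Take a compact
neighbourhood `K ⊆ U` of a point of `U`: every point of `K` lies in `D`, so it returns to
`interior K` at some positive time, and by compactness within a uniform time `N`. Hence forward
orbits starting in `K` never leave the compact set `⋃ k ≤ N, f^[k] '' K`, which therefore contains
the closure of a dense orbit and is the whole space. Every point is then `f^[k] y` with `y ∈ K ⊆ D`,
so every forward orbit is dense.
-/

open Set

section Iterate

variable {X : Type*} {f : X → X}

theorem DenseRange.iterate_apply_self [TopologicalSpace X] [T1Space X] [PerfectSpace X] {x : X}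
    (h : DenseRange fun n : ℕ => f^[n] x) : DenseRange fun n : ℕ => f^[n] (f x) := by
  refine (h.sdiff_singleton x).mono ?_
  rintro _ ⟨⟨_ | n, rfl⟩, hx⟩
  · exact absurd rfl hx
  · exact ⟨n, (Function.iterate_succ_apply f n x).symm⟩

theorem DenseRange.iterate_apply_iterate [TopologicalSpace X] [T1Space X] [PerfectSpace X]
    {x : X} (h : DenseRange fun n : ℕ => f^[n] x) (k : ℕ) :
    DenseRange fun n : ℕ => f^[n] (f^[k] x) := by
  induction k with
  | zero => exact h
  | succ k ih => simpa only [Function.iterate_succ_apply'] using ih.iterate_apply_self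

theorem IsCompact.exists_uniform_return_time [TopologicalSpace X] {K V : Set X}
    (hK : IsCompact K) (hf : Continuous f) (hV : IsOpen V)
    (hret : ∀ x ∈ K, ∃ n, 0 < n ∧ f^[n] x ∈ V) :
    ∃ N, ∀ x ∈ K, ∃ n, 0 < n ∧ n ≤ N ∧ f^[n] x ∈ V := by
  obtain ⟨t, ht⟩ := hK.elim_finite_subcover (fun n : ℕ => f^[n + 1] ⁻¹' V)
    (fun n => hV.preimage (hf.iterate (n + 1))) fun x hx => by
      obtain ⟨n, hn, hnV⟩ := hret x hx
      obtain ⟨m, rfl⟩ := Nat.exists_eq_add_of_le' hn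
      exact mem_iUnion.2 ⟨m, hnV⟩
  refine ⟨t.sup id + 1, fun x hx => ?_⟩
  obtain ⟨m, hmt, hmV⟩ := mem_iUnion₂.1 (ht hx)
  exact ⟨m + 1, m.succ_pos, Nat.succ_le_succ (Finset.le_sup (f := id) hmt), hmV⟩

theorem iterate_mem_biUnion_image_of_return {K : Set X} {N : ℕ}
    (hret : ∀ x ∈ K, ∃ n, 0 < n ∧ n ≤ N ∧ f^[n] x ∈ K) (m : ℕ) {x : X} (hx : x ∈ K) :
    f^[m] x ∈ ⋃ k ≤ N, f^[k] '' K := by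
  induction m using Nat.strong_induction_on generalizing x with
  | _ m ih =>
    by_cases hm : m ≤ N
    · exact mem_biUnion hm ⟨x, hx, rfl⟩
    obtain ⟨n, hn, hnN, hnK⟩ := hret x hx
    have hsplit : f^[m] x = f^[m - n] (f^[n] x) := by
      rw [← Function.iterate_add_apply, Nat.sub_add_cancel (by omega)]
    rw [hsplit]
    exact ih (m - n) (by omega) hnK

theorem IsCompact.biUnion_iterate_image [TopologicalSpace X] {K : Set X} (hK : IsCompact K)
    (hf : Continuous f) (N : ℕ) : IsCompact (⋃ k ≤ N, f^[k] '' K) :=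
  (finite_Iic N).isCompact_biUnion fun k _ => hK.image (hf.iterate k)

theorem biUnion_iterate_image_eq_univ [TopologicalSpace X] [T2Space X] {K : Set X} {N : ℕ}
    (hC : IsCompact (⋃ k ≤ N, f^[k] '' K)) {u : X} (hu : u ∈ K)
    (hdense : DenseRange fun n : ℕ => f^[n] u)
    (hret : ∀ x ∈ K, ∃ n, 0 < n ∧ n ≤ N ∧ f^[n] x ∈ K) :
    ⋃ k ≤ N, f^[k] '' K = univ := by
  refine univ_subset_iff.1 <| hdense.closure_range ▸ closure_minimal ?_ hC.isClosed
  rintro _ ⟨m, rfl⟩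
  exact iterate_mem_biUnion_image_of_return hret m hu

end Iterate

theorem Homeomorph.range_iterate_subset_range_zpow {X : Type*} [TopologicalSpace X]
    (f : X ≃ₜ X) (x : X) :
    (range fun n : ℕ => (⇑f)^[n] x) ⊆ range fun n : ℤ => (f.toEquiv ^ n) x := by
  rintro _ ⟨n, rfl⟩
  exact ⟨n, by simp only [zpow_natCast, Equiv.Perm.coe_pow, Homeomorph.coe_toEquiv]⟩

theorem stmt3_general {X : Type*} [MetricSpace X] [LocallyCompactSpace X]
    [PerfectSpace X] (f : X ≃ₜ X)
    (hppm : ∃ U : Set X, IsOpen U ∧ U.Nonempty ∧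
      ∀ x ∈ U, Dense (Set.range fun n : ℕ => (⇑f)^[n] x)) :
    CompactSpace X ∧ ∀ x : X, Dense (Set.range fun n : ℤ => (f.toEquiv ^ n) x) := by
  obtain ⟨U, hUo, ⟨u, hu⟩, hU⟩ := hppm
  obtain ⟨K, hKc, huK, hKU⟩ := exists_compact_subset hUo hu
  have hret : ∀ x ∈ K, ∃ n, 0 < n ∧ (⇑f)^[n] x ∈ interior K := fun x hx => by
    obtain ⟨m, hm⟩ := (DenseRange.iterate_apply_self (hU x (hKU hx))).exists_mem_open
      isOpen_interior ⟨u, huK⟩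
    exact ⟨m + 1, m.succ_pos, hm⟩
  obtain ⟨N, hN⟩ := hKc.exists_uniform_return_time f.continuous isOpen_interior hret
  have hC := hKc.biUnion_iterate_image f.continuous N
  have hcover := biUnion_iterate_image_eq_univ hC (interior_subset huK) (hU u hu)
    fun x hx => (hN x hx).imp fun _ ⟨hn, hnN, hnK⟩ => ⟨hn, hnN, interior_subset hnK⟩
  refine ⟨⟨hcover ▸ hC⟩, fun x => ?_⟩
  have hx : x ∈ ⋃ k ≤ N, (⇑f)^[k] '' K := hcover ▸ mem_univ x
  obtain ⟨k, -, y, hy, rfl⟩ := mem_iUnion₂.1 hx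
  exact (DenseRange.iterate_apply_iterate (hU y (hKU hy)) k).mono
    (f.range_iterate_subset_range_zpow _)

/-- A positively pseudo-minimal homeomorphism of a locally compact, perfect, separable
metric space lives on a compact space and is minimal. -/
theorem stmt3 {X : Type*} [MetricSpace X] [LocallyCompactSpace X]
    [SecondCountableTopology X] [PerfectSpace X] (f : X ≃ₜ X)
    (hppm : ∃ U : Set X, IsOpen U ∧ U.Nonempty ∧
      ∀ x ∈ U, Dense (Set.range fun n : ℕ => (⇑f)^[n] x)) :
    CompactSpace X ∧ ∀ x : X, Dense (Set.range fun n : ℤ => (f.toEquiv ^ n) x) :=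
  stmt3_general f hppm
end

section
/- Let X be a smooth manifold of dimension greater than 1 and φ : X × ℝ → X a C¹ flow. If there exists a nonempty open set U such that the forward semi-orbit {φ(x,t) : t ≥ 0} is dense in X for every x ∈ U, then X is compact and the flow is minimal (every orbit is dense). -/
open Topology Manifold Filter Set Function

/-!
The forward orbit of a point `x` with dense forward orbit comes back, at some positive time, to
every nonempty open set `V`, because removing `x` from a dense set in a space without isolated
points leaves it dense. Taking `V = interior K` for a compact neighbourhood `K ⊆ U`, compactness
of `K` makes these return times uniformly bounded by some `L` on `K`. Cutting a forward orbit
starting in `K` at its last visit to `K` then shows that it lies in the compact set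
`⋃_{0 ≤ t ≤ L} φₜ(K)`, which is therefore all of `X`. So `X` is compact, and every orbit
passes through `K ⊆ U`, hence is dense.
-/

theorem ChartedSpace.perfectSpace (H : Type*) [TopologicalSpace H] [PerfectSpace H]
    (M : Type*) [TopologicalSpace M] [ChartedSpace H M] : PerfectSpace M := by
  refine perfectSpace_iff_forall_not_isolated.2 fun x => ?_
  rw [neBot_iff, Ne, ← isOpen_singleton_iff_punctured_nhds]
  intro hx
  have := (chartAt H x).isOpen_image_of_subset_source hx
    (singleton_subset_iff.2 (mem_chart_source H x))
  rw [image_singleton] at this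
  exact not_isOpen_singleton _ this

namespace Flow

theorem orbit_apply {τ X : Type*} [TopologicalSpace τ] [AddGroup τ]
    [TopologicalSpace X] (ϕ : Flow τ X) (t : τ) (x : X) : ϕ.orbit (ϕ t x) = ϕ.orbit x :=
  @AddAction.orbit_vadd τ X _ ϕ.toAddAction t x

variable {X : Type*} [TopologicalSpace X] (ϕ : Flow ℝ X)

theorem forwardOrbit_eq_image_Ici (x : X) : ϕ.forwardOrbit x = (ϕ · x) '' Ici 0 := by
  ext y
  simp [forwardOrbit_eq_range_nonneg]

theorem exists_pos_apply_mem_of_dense_forwardOrbit [T1Space X] [PerfectSpace X] {x : X}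
    (hx : Dense (ϕ.forwardOrbit x)) {V : Set X} (hV : IsOpen V) (hVne : V.Nonempty) :
    ∃ t > 0, ϕ t x ∈ V := by
  rw [forwardOrbit_eq_image_Ici] at hx
  obtain ⟨_, hV, ⟨t, ht, rfl⟩, hne⟩ := (hx.sdiff_singleton x).inter_open_nonempty V hV hVne
  refine ⟨t, lt_of_le_of_ne ht ?_, hV⟩
  rintro rfl
  exact hne (ϕ.map_zero_apply x)

theorem exists_uniform_return_bound {K V : Set X} (hK : IsCompact K) (hV : IsOpen V)
    (hret : ∀ x ∈ K, ∃ t > 0, ϕ t x ∈ V) : ∃ L, ∀ x ∈ K, ∃ t ∈ Ioc 0 L, ϕ t x ∈ V := by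
  let W : ℕ → Set X := fun m => ⋃ t ∈ Ioc (0 : ℝ) m, ϕ t ⁻¹' V
  have hWo (m : ℕ) : IsOpen (W m) :=
    isOpen_biUnion fun t _ => hV.preimage (ϕ.continuous_toFun t)
  have hWmono : Monotone W := fun m m' h =>
    biUnion_subset_biUnion_left (Ioc_subset_Ioc_right (Nat.cast_le.2 h))
  have hcover : K ⊆ ⋃ m, W m := fun x hx => by
    obtain ⟨t, ht, htV⟩ := hret x hx
    obtain ⟨m, hm⟩ := exists_nat_ge t
    exact mem_iUnion.2 ⟨m, mem_biUnion ⟨ht, hm⟩ htV⟩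
  obtain ⟨m, hm⟩ := hK.elim_directed_cover W hWo hcover hWmono.directed_le
  exact ⟨m, fun x hx => by simpa [W] using hm hx⟩

theorem forwardOrbit_subset_image_Icc_prod {K : Set X} (hK : IsClosed K) {L : ℝ}
    (hret : ∀ x ∈ K, ∃ t ∈ Ioc 0 L, ϕ t x ∈ K) {x : X} (hx : x ∈ K) :
    ϕ.forwardOrbit x ⊆ uncurry ϕ '' (Icc 0 L ×ˢ K) := by
  rw [forwardOrbit_eq_image_Ici]
  rintro _ ⟨s, hs, rfl⟩
  let S := Icc 0 s ∩ (ϕ · x) ⁻¹' K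
  have hS : IsCompact S :=
    isCompact_Icc.inter_right (hK.preimage (ϕ.continuous continuous_id continuous_const))
  have h0S : (0 : ℝ) ∈ S := ⟨left_mem_Icc.2 hs, by rwa [mem_preimage, map_zero_apply]⟩
  obtain ⟨⟨hb0, hbs⟩, hbK⟩ := hS.sSup_mem ⟨0, h0S⟩
  set b := sSup S
  have hgap : s - b ≤ L := by
    by_contra! h
    obtain ⟨t, ⟨ht0, htL⟩, htK⟩ := hret _ hbK
    have htb : t + b ∈ S := ⟨⟨by linarith, by linarith⟩, by rwa [mem_preimage, map_add]⟩
    linarith [le_csSup hS.bddAbove htb]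
  refine ⟨(s - b, ϕ b x), ⟨⟨by linarith, hgap⟩, hbK⟩, ?_⟩
  simp [← map_add]

theorem exists_image_Icc_prod_eq_univ [T2Space X] [PerfectSpace X] {K : Set X}
    (hK : IsCompact K) (hint : (interior K).Nonempty)
    (hdense : ∀ x ∈ K, Dense (ϕ.forwardOrbit x)) :
    ∃ L, uncurry ϕ '' (Icc 0 L ×ˢ K) = univ := by
  obtain ⟨u, hu⟩ := hint
  obtain ⟨L, hL⟩ := ϕ.exists_uniform_return_bound hK isOpen_interior fun x hx =>
    ϕ.exists_pos_apply_mem_of_dense_forwardOrbit (hdense x hx) isOpen_interior ⟨u, hu⟩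
  have hsub := ϕ.forwardOrbit_subset_image_Icc_prod hK.isClosed
    (fun x hx => (hL x hx).imp fun t ht => ⟨ht.1, interior_subset ht.2⟩) (interior_subset hu)
  have hclosed : IsClosed (uncurry ϕ '' (Icc 0 L ×ˢ K)) :=
    ((isCompact_Icc.prod hK).image ϕ.cont').isClosed
  refine ⟨L, eq_univ_of_univ_subset ?_⟩
  rw [← (hdense u (interior_subset hu)).closure_eq]
  exact closure_minimal hsub hclosed

theorem compactSpace_and_dense_orbit [T2Space X] [LocallyCompactSpace X] [PerfectSpace X]
    {U : Set X} (hU : IsOpen U) (hUne : U.Nonempty)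
    (hdense : ∀ x ∈ U, Dense (ϕ.forwardOrbit x)) :
    CompactSpace X ∧ ∀ x, Dense (ϕ.orbit x) := by
  obtain ⟨u, hu⟩ := hUne
  obtain ⟨K, hKu, hKU, hK⟩ := local_compact_nhds (hU.mem_nhds hu)
  obtain ⟨L, hL⟩ := ϕ.exists_image_Icc_prod_eq_univ hK ⟨u, mem_interior_iff_mem_nhds.2 hKu⟩
    fun x hx => hdense x (hKU hx)
  refine ⟨⟨hL ▸ (isCompact_Icc.prod hK).image ϕ.cont'⟩, fun x => ?_⟩
  obtain ⟨⟨t, y⟩, ⟨-, hy⟩, rfl⟩ := hL.symm ▸ mem_univ x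
  rw [uncurry_apply_pair, orbit_apply]
  exact (hdense y (hKU hy)).mono (ϕ.forwardOrbit_subset_orbit y)

end Flow

theorem stmt4_general {n : ℕ} (hn : 1 < n) {X : Type*} [TopologicalSpace X] [T2Space X]
    [ChartedSpace (EuclideanSpace ℝ (Fin n)) X]
    (φ : X → ℝ → X)
    (hC1 : ContMDiff ((𝓡 n).prod 𝓘(ℝ, ℝ)) (𝓡 n) 1 fun p : X × ℝ => φ p.1 p.2)
    (h0 : ∀ x, φ x 0 = x)
    (hadd : ∀ x s t, φ (φ x s) t = φ x (s + t))
    (hppm : ∃ U : Set X, IsOpen U ∧ U.Nonempty ∧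
      ∀ x ∈ U, Dense {y : X | ∃ t : ℝ, 0 ≤ t ∧ φ x t = y}) :
    CompactSpace X ∧ ∀ x : X, Dense (Set.range (φ x)) := by
  obtain ⟨U, hU, hUne, hdense⟩ := hppm
  have : NeZero n := ⟨by omega⟩
  have := ChartedSpace.locallyCompactSpace (EuclideanSpace ℝ (Fin n)) X
  have := ChartedSpace.perfectSpace (EuclideanSpace ℝ (Fin n)) X
  let ϕ : Flow ℝ X :=
    { toFun := fun t x => φ x t
      cont' := hC1.continuous.comp continuous_swap
      map_add' := fun s t x => by rw [hadd, add_comm]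
      map_zero' := h0 }
  refine ϕ.compactSpace_and_dense_orbit hU hUne fun x hx => ?_
  rw [Flow.forwardOrbit_eq_image_Ici]
  exact hdense x hx

/-- A positively pseudo-minimal `C¹` flow on a smooth manifold of dimension `> 1`
lives on a compact manifold and is minimal. -/
theorem stmt4 {n : ℕ} (hn : 1 < n) {X : Type*} [TopologicalSpace X] [T2Space X]
    [ChartedSpace (EuclideanSpace ℝ (Fin n)) X] [IsManifold (𝓡 n) (⊤ : ℕ∞) X]
    (φ : X → ℝ → X)
    (hC1 : ContMDiff ((𝓡 n).prod 𝓘(ℝ, ℝ)) (𝓡 n) 1 fun p : X × ℝ => φ p.1 p.2)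
    (h0 : ∀ x, φ x 0 = x)
    (hadd : ∀ x s t, φ (φ x s) t = φ x (s + t))
    (hppm : ∃ U : Set X, IsOpen U ∧ U.Nonempty ∧
      ∀ x ∈ U, Dense {y : X | ∃ t : ℝ, 0 ≤ t ∧ φ x t = y}) :
    CompactSpace X ∧ ∀ x : X, Dense (Set.range (φ x)) :=
  stmt4_general hn φ hC1 h0 hadd hppm
end

section
/- Let f be a pseudo-minimal homeomorphism of a metric space X, with X_M the set of points with dense orbit, and fix a prime p. For x ∈ X_M and residue class [i] mod p, define A_{[i]}^+(x) as the set of y ∈ X_M for which there is a sequence n_k ∈ ℤ with pn_k + i → +∞ and f^{pn_k+i}(x) → y. Then: if x has dense forward orbit, the union over i of A_{[i]}^+(x) equals X_M, f(A_{[i]}^+(x)) = A_{[i+1]}^+(x), and each A_{[i]}^+(x) has nonempty interior in X_M. Furthermore, if y ∈ A_{[i₀]}^+(x), then A_{[i]}^±(y) ⊆ A_{[i₀+i]}^+(x) for all i. -/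
/-!
Write `Ω_i(x)` (`residueOmegaLimit f p x i`) for the set of cluster points of `f^m x` as
`m → +∞` along `m ≡ i [ZMOD p]`, so that `A_{[i]}^+(x) = X_M ∩ Ω_i(x)` (sequences can be
extracted in a first countable space). The sets `Ω_i(x)` are closed, depend only on `i mod p`, and
`f^e` maps `Ω_i(x)` into `Ω_{i+e}(x)`. When the forward orbit of `x` is dense, every point is a
cluster point of it (each tail is the image of the orbit under `f^[N]`, hence dense), so it lies in
one of the finitely many `Ω_j(x)`; a nonempty open subset of `X_M` is then covered by finitely many
closed sets, so it meets the interior of one of them, and the shifts `f^e` carry that interior to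
every residue class. Finally, if `y ∈ Ω_{i₀}(x)` then every `f^e y` with
`e ≡ i` lies in the closed set `Ω_{i₀+i}(x)`, and so do all limits of such points.
-/

open Topology Filter

/-- The set `X_M` of points with dense two-sided orbit. -/
def XM {X : Type*} [TopologicalSpace X] (f : X ≃ₜ X) : Set X :=
  {x : X | Dense (Set.range fun n : ℤ => (f.toEquiv ^ n) x)}

/-- `A_{[i]}^+(x)`: points `y ∈ X_M` reachable as limits of `f^{p n_k + i} x` along a
sequence with `p n_k + i → +∞`. -/
def Aplus {X : Type*} [TopologicalSpace X] (f : X ≃ₜ X) (p : ℕ) (x : X) (i : ℤ) :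
    Set X :=
  {y ∈ XM f | ∃ n : ℕ → ℤ,
    Tendsto (fun k => (p : ℤ) * n k + i) atTop atTop ∧
    Tendsto (fun k => (f.toEquiv ^ ((p : ℤ) * n k + i)) x) atTop (𝓝 y)}

/-- `A_{[i]}^-(x)`: as above but with `p n_k + i → -∞`. -/
def Aminus {X : Type*} [TopologicalSpace X] (f : X ≃ₜ X) (p : ℕ) (x : X) (i : ℤ) :
    Set X :=
  {y ∈ XM f | ∃ n : ℕ → ℤ,
    Tendsto (fun k => (p : ℤ) * n k + i) atTop atBot ∧
    Tendsto (fun k => (f.toEquiv ^ ((p : ℤ) * n k + i)) x) atTop (𝓝 y)}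

open Set

section Generic

variable {X : Type*} [TopologicalSpace X]

theorem Homeomorph.toEquiv_zpow_s9 (f : X ≃ₜ X) (n : ℤ) : (f ^ n).toEquiv = f.toEquiv ^ n :=
  map_zpow (⟨⟨Homeomorph.toEquiv, rfl⟩, fun _ _ => rfl⟩ : (X ≃ₜ X) →* Equiv.Perm X) f n

theorem MapClusterPt.exists_inf_principal_of_cover {α ι : Type*} {F : Filter α} {u : α → X}
    {y : X} {s : Finset ι} {S : ι → Set α} (hS : ∀ a, ∃ j ∈ s, a ∈ S j)
    (h : MapClusterPt y F u) : ∃ j ∈ s, MapClusterPt y (F ⊓ 𝓟 (S j)) u := by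
  by_contra! hnot
  simp only [mapClusterPt_iff_frequently, not_forall, not_frequently, exists_prop,
    eventually_inf_principal] at hnot
  choose! t ht_nhds ht_avoid using hnot
  obtain ⟨a, hat, hav⟩ := ((mapClusterPt_iff_frequently.1 h _
    ((Finset.iInter_mem_sets s).2 ht_nhds)).and_eventually
      ((eventually_all_finset s).2 ht_avoid)).exists
  obtain ⟨j, hj, haj⟩ := hS a
  exact hav j hj haj (mem_iInter₂.1 hat j hj)

theorem exists_inter_interior_nonempty_of_subset_biUnion {ι : Type*} {C : ι → Set X}
    (hC : ∀ j, IsClosed (C j)) (s : Finset ι) {U : Set X} (hU : IsOpen U) (hne : U.Nonempty)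
    (hcover : U ⊆ ⋃ j ∈ s, C j) : ∃ j ∈ s, (U ∩ interior (C j)).Nonempty := by
  classical
  induction s using Finset.induction_on generalizing U with
  | empty => simpa using hcover hne.some_mem
  | insert a s _ ih =>
    by_cases hUa : U ⊆ C a
    · exact ⟨a, Finset.mem_insert_self a s, by
        rwa [inter_eq_left.2 (interior_maximal hUa hU)]⟩
    · have hcover' : U \ C a ⊆ ⋃ j ∈ s, C j := fun z hz => by
        simpa [hz.2] using hcover hz.1
      obtain ⟨j, hj, hne'⟩ := ih (hU.sdiff (hC a)) (sdiff_nonempty.2 hUa) hcover'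
      exact ⟨j, Finset.mem_insert_of_mem hj, hne'.mono (inter_subset_inter_left _ sdiff_subset)⟩

theorem Int.exists_mem_range_modEq {p : ℕ} (hp : 0 < p) (m : ℤ) :
    ∃ j ∈ Finset.range p, m ≡ j [ZMOD p] := by
  have hp' : (0 : ℤ) < p := by exact_mod_cast hp
  refine ⟨(m % p).toNat, Finset.mem_range.2 (by have := Int.emod_lt_of_pos m hp'; omega), ?_⟩
  rw [Int.toNat_of_nonneg (Int.emod_nonneg m hp'.ne')]
  exact (Int.mod_modEq m p).symm

end Generic

section Orbits

variable {X : Type*} [TopologicalSpace X] (f : X ≃ₜ X)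

theorem continuous_zpow_apply (n : ℤ) : Continuous (f.toEquiv ^ n) := by
  rw [← f.toEquiv_zpow_s9]
  exact (f ^ n).continuous

theorem isOpenMap_zpow_apply (n : ℤ) : IsOpenMap (f.toEquiv ^ n) := by
  rw [← f.toEquiv_zpow_s9]
  exact (f ^ n).isOpenMap

theorem zpow_apply_zpow_apply (a b : ℤ) (y : X) :
    (f.toEquiv ^ a) ((f.toEquiv ^ b) y) = (f.toEquiv ^ (a + b)) y := by
  rw [zpow_add, Equiv.Perm.mul_apply]

theorem zpow_apply_mem_XM {y : X} (hy : y ∈ XM f) (e : ℤ) : (f.toEquiv ^ e) y ∈ XM f := by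
  have hrange : (range fun n : ℤ => (f.toEquiv ^ n) ((f.toEquiv ^ e) y)) =
      range fun n : ℤ => (f.toEquiv ^ n) y := by
    simp_rw [zpow_apply_zpow_apply]
    exact (Equiv.addRight e).surjective.range_comp fun n => (f.toEquiv ^ n) y
  change Dense _
  rw [hrange]
  exact hy

def residueOmegaLimit (p : ℕ) (x : X) (i : ℤ) : Set X :=
  {y | MapClusterPt y (atTop ⊓ 𝓟 {m | m ≡ i [ZMOD p]}) fun m : ℤ => (f.toEquiv ^ m) x}

variable {f} {p : ℕ} {x : X}

theorem isClosed_residueOmegaLimit (i : ℤ) : IsClosed (residueOmegaLimit f p x i) :=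
  isClosed_setOfPred_clusterPt

theorem residueOmegaLimit_congr {i j : ℤ} (h : i ≡ j [ZMOD p]) :
    residueOmegaLimit f p x i = residueOmegaLimit f p x j := by
  have hclass : {m : ℤ | m ≡ i [ZMOD p]} = {m | m ≡ j [ZMOD p]} :=
    ext fun m => ⟨fun hm => hm.trans h, fun hm => hm.trans h.symm⟩
  simp only [residueOmegaLimit, hclass]

theorem zpow_apply_mem_residueOmegaLimit {i : ℤ} {y : X} (hy : y ∈ residueOmegaLimit f p x i)
    (e : ℤ) : (f.toEquiv ^ e) y ∈ residueOmegaLimit f p x (i + e) := by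
  have hshift : Tendsto (· + e) (atTop ⊓ 𝓟 {m : ℤ | m ≡ i [ZMOD p]})
      (atTop ⊓ 𝓟 {m | m ≡ i + e [ZMOD p]}) :=
    (tendsto_atTop_add_const_right _ e tendsto_id).inf
      (tendsto_principal_principal.2 fun m hm => hm.add_right e)
  refine MapClusterPt.of_comp hshift ?_
  have hcomp : (fun m : ℤ => (f.toEquiv ^ m) x) ∘ (· + e) =
      (f.toEquiv ^ e) ∘ fun m : ℤ => (f.toEquiv ^ m) x := by
    funext m
    simp only [Function.comp_apply, zpow_apply_zpow_apply, add_comm]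
  rw [hcomp]
  exact hy.continuousAt_comp (continuous_zpow_apply f e).continuousAt

theorem mem_residueOmegaLimit_of_tendsto {i₀ i : ℤ} {y z : X}
    (hy : y ∈ residueOmegaLimit f p x i₀) {n : ℕ → ℤ}
    (hz : Tendsto (fun k => (f.toEquiv ^ ((p : ℤ) * n k + i)) y) atTop (𝓝 z)) :
    z ∈ residueOmegaLimit f p x (i₀ + i) := by
  refine (isClosed_residueOmegaLimit _).mem_of_tendsto hz (Eventually.of_forall fun k => ?_)
  have hk : (p : ℤ) * n k + i ≡ i [ZMOD p] := Int.add_modEq_right_iff.2 (dvd_mul_right _ _)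
  rw [← residueOmegaLimit_congr (hk.add_left i₀)]
  exact zpow_apply_mem_residueOmegaLimit hy _

theorem Aplus_eq_XM_inter [FirstCountableTopology X] (i : ℤ) :
    Aplus f p x i = XM f ∩ residueOmegaLimit f p x i := by
  ext y
  refine and_congr_right fun _ => ⟨?_, fun hy => ?_⟩
  · rintro ⟨n, hn_top, hn_lim⟩
    exact MapClusterPt.of_comp (u := fun m : ℤ => (f.toEquiv ^ m) x)
      (tendsto_inf.2 ⟨hn_top, tendsto_principal.2 (Eventually.of_forall fun k =>
        Int.add_modEq_right_iff.2 (dvd_mul_right _ _))⟩)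
      hn_lim.mapClusterPt
  · obtain ⟨ψ, hψ_lim, hψ⟩ := MapClusterPt.exists_seq_tendsto hy
    obtain ⟨hψ_top, hψ_mod⟩ := tendsto_inf.1 hψ
    have hψ_eq : (fun k => (p : ℤ) * ((ψ k - i) / p) + i) =ᶠ[atTop] ψ :=
      (tendsto_principal.1 hψ_mod).mono fun k hk => by
        have := Int.mul_ediv_cancel' (Int.ModEq.dvd hk.symm)
        simp only
        omega
    exact ⟨fun k => (ψ k - i) / p, hψ_top.congr' hψ_eq.symm,
      hψ_lim.congr' (hψ_eq.fun_comp fun m => (f.toEquiv ^ m) x).symm⟩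

theorem image_zpow_Aplus [FirstCountableTopology X] (i e : ℤ) :
    ⇑(f.toEquiv ^ e) '' Aplus f p x i = Aplus f p x (i + e) := by
  have hmaps : ∀ i e, MapsTo ⇑(f.toEquiv ^ e) (Aplus f p x i) (Aplus f p x (i + e)) := by
    intro i e y hy
    rw [Aplus_eq_XM_inter] at hy ⊢
    exact ⟨zpow_apply_mem_XM f hy.1 e, zpow_apply_mem_residueOmegaLimit hy.2 e⟩
  refine (hmaps i e).image_subset.antisymm fun z hz => ⟨(f.toEquiv ^ (-e)) z, ?_, ?_⟩
  · simpa using hmaps _ (-e) hz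
  · rw [zpow_apply_zpow_apply, add_neg_cancel, zpow_zero, Equiv.Perm.one_apply]

theorem mem_Aplus_of_tendsto [FirstCountableTopology X] {i₀ i : ℤ} {y z : X}
    (hy : y ∈ Aplus f p x i₀) (hz : z ∈ XM f) {n : ℕ → ℤ}
    (hlim : Tendsto (fun k => (f.toEquiv ^ ((p : ℤ) * n k + i)) y) atTop (𝓝 z)) :
    z ∈ Aplus f p x (i₀ + i) := by
  rw [Aplus_eq_XM_inter] at hy ⊢
  exact ⟨hz, mem_residueOmegaLimit_of_tendsto hy.2 hlim⟩

end Orbits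

section DenseForwardOrbit

variable {X : Type*} [TopologicalSpace X] {f : X ≃ₜ X} {p : ℕ} {x : X}

theorem zpow_natCast_apply (f : X ≃ₜ X) (n : ℕ) (y : X) :
    (f.toEquiv ^ (n : ℤ)) y = (⇑f)^[n] y := by
  rw [zpow_natCast, Equiv.Perm.coe_pow]
  rfl

theorem mapClusterPt_orbit_of_denseRange (hx : DenseRange fun n : ℕ => (⇑f)^[n] x) (y : X) :
    MapClusterPt y atTop fun m : ℤ => (f.toEquiv ^ m) x := by
  refine MapClusterPt.of_comp tendsto_natCast_atTop_atTop
    (mapClusterPt_iff_frequently.2 fun s hs => frequently_atTop.2 fun N => ?_)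
  have htail := (f.surjective.iterate N).denseRange.comp hx (f.continuous.iterate N)
  obtain ⟨n, hn⟩ := htail.mem_nhds hs
  refine ⟨N + n, Nat.le_add_right N n, ?_⟩
  change (f.toEquiv ^ ((N + n : ℕ) : ℤ)) x ∈ s
  rwa [zpow_natCast_apply, Function.iterate_add_apply]

theorem exists_mem_residueOmegaLimit (hp : 0 < p) (hx : DenseRange fun n : ℕ => (⇑f)^[n] x)
    (y : X) : ∃ j ∈ Finset.range p, y ∈ residueOmegaLimit f p x j :=
  (mapClusterPt_orbit_of_denseRange hx y).exists_inf_principal_of_cover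
    (S := fun j : ℕ => {m : ℤ | m ≡ j [ZMOD p]}) (Int.exists_mem_range_modEq hp)

variable [FirstCountableTopology X]

theorem biUnion_Aplus_eq_XM (hp : 0 < p) (hx : DenseRange fun n : ℕ => (⇑f)^[n] x) :
    ⋃ i ∈ Finset.range p, Aplus f p x i = XM f := by
  refine subset_antisymm (iUnion₂_subset fun i _ y hy => hy.1) fun y hy => ?_
  obtain ⟨j, hj, hyj⟩ := exists_mem_residueOmegaLimit hp hx y
  exact mem_iUnion₂_of_mem hj (by rw [Aplus_eq_XM_inter]; exact ⟨hy, hyj⟩)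

theorem interior_Aplus_nonempty (hp : 0 < p)
    (hU : ∃ U : Set X, IsOpen U ∧ U.Nonempty ∧ ∀ z ∈ U, z ∈ XM f)
    (hx : DenseRange fun n : ℕ => (⇑f)^[n] x) (i : ℤ) : (interior (Aplus f p x i)).Nonempty := by
  obtain ⟨U, hU_open, hU_ne, hU_XM⟩ := hU
  obtain ⟨j, -, v, hvU, hvj⟩ := exists_inter_interior_nonempty_of_subset_biUnion
    (C := fun j : ℕ => residueOmegaLimit f p x j) (fun j => isClosed_residueOmegaLimit j)
    (Finset.range p) hU_open hU_ne
    fun y _ => by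
      obtain ⟨j, hj, hyj⟩ := exists_mem_residueOmegaLimit hp hx y
      exact mem_iUnion₂_of_mem hj hyj
  have hsub : U ∩ interior (residueOmegaLimit f p x j) ⊆ Aplus f p x j := by
    rw [Aplus_eq_XM_inter]
    exact inter_subset_inter hU_XM interior_subset
  have hv : v ∈ interior (Aplus f p x j) :=
    interior_maximal hsub (hU_open.inter isOpen_interior) ⟨hvU, hvj⟩
  refine ⟨_, interior_maximal ?_ (isOpenMap_zpow_apply f (i - j) _ isOpen_interior)
    (mem_image_of_mem _ hv)⟩
  calc ⇑(f.toEquiv ^ (i - j)) '' interior (Aplus f p x j)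
      ⊆ ⇑(f.toEquiv ^ (i - j)) '' Aplus f p x j := image_mono interior_subset
    _ = Aplus f p x i := by rw [image_zpow_Aplus, add_sub_cancel]

end DenseForwardOrbit

theorem stmt9_general {X : Type*} [MetricSpace X] (f : X ≃ₜ X) (p : ℕ) (hp : p.Prime)
    (hpm : ∃ U : Set X, IsOpen U ∧ U.Nonempty ∧ ∀ x ∈ U, x ∈ XM f)
    (x : X)
    (hxplus : Dense (Set.range fun n : ℕ => (⇑f)^[n] x)) :
    (⋃ i ∈ Finset.range p, Aplus f p x (i : ℤ)) = XM f ∧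
    (∀ i : ℤ, ⇑f '' Aplus f p x i = Aplus f p x (i + 1)) ∧
    (∀ i : ℤ, (interior (Aplus f p x i)).Nonempty) ∧
    (∀ i₀ : ℤ, ∀ y ∈ Aplus f p x i₀, ∀ i : ℤ,
      Aplus f p y i ⊆ Aplus f p x (i₀ + i) ∧ Aminus f p y i ⊆ Aplus f p x (i₀ + i)) := by
  refine ⟨biUnion_Aplus_eq_XM hp.pos hxplus, fun i => ?_,
    interior_Aplus_nonempty hp.pos hpm hxplus, fun i₀ y hy i => ?_⟩
  · simpa using image_zpow_Aplus (f := f) (p := p) (x := x) i 1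
  · exact ⟨fun z ⟨hzM, _, _, hz⟩ => mem_Aplus_of_tendsto hy hzM hz,
      fun z ⟨hzM, _, _, hz⟩ => mem_Aplus_of_tendsto hy hzM hz⟩

/-- Basic properties of the sets `A_{[i]}^±(x)` for a pseudo-minimal homeomorphism. -/
theorem stmt9 {X : Type*} [MetricSpace X] (f : X ≃ₜ X) (p : ℕ) (hp : p.Prime)
    (hpm : ∃ U : Set X, IsOpen U ∧ U.Nonempty ∧ ∀ x ∈ U, x ∈ XM f)
    (x : X) (hx : x ∈ XM f)
    (hxplus : Dense (Set.range fun n : ℕ => (⇑f)^[n] x)) :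
    (⋃ i ∈ Finset.range p, Aplus f p x (i : ℤ)) = XM f ∧
    (∀ i : ℤ, ⇑f '' Aplus f p x i = Aplus f p x (i + 1)) ∧
    (∀ i : ℤ, (interior (Aplus f p x i)).Nonempty) ∧
    (∀ i₀ : ℤ, ∀ y ∈ Aplus f p x i₀, ∀ i : ℤ,
      Aplus f p y i ⊆ Aplus f p x (i₀ + i) ∧ Aminus f p y i ⊆ Aplus f p x (i₀ + i)) :=
  stmt9_general f p hp hpm x hxplus
end

section
/- Let f : X → X be an expansive homeomorphism of a compact metric space with expansivity constant e, and let c, ε > 0 with 4c < ε. Suppose Γ ⊆ W^s_{ε/2}(x) is a compact connected set containing x with diameter ≥ 6c, where W^s_δ(x) = {y : d(f^i(x), f^i(y)) ≤ δ for all i ≥ 0}. Then there exist points α, β ∈ Γ and compact connected sets Γ_α ∋ α, Γ_β ∋ β such that: Γ_α, Γ_β ⊆ Γ; the distance between Γ_α and Γ_β is greater than c/2; Γ_α ⊆ W^s_ε(α) and Γ_β ⊆ W^s_ε(β); and c ≤ diam(Γ_α), diam(Γ_β) ≤ 2c. -/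
/-! A compact continuum `Γ` of diameter at least `6c` contains two points `p`, `q` with
`dist p q > 3c`. By boundary bumping, the component of `p` in `Γ ∩ closedBall p c` reaches the
sphere of radius `c`, so its closure `Γ_p` is a continuum with `c ≤ diam Γ_p ≤ 2c`; likewise
for `q`. The two pieces lie in disjoint balls at distance more than `c`, and the triangle
inequality along the orbits turns `Γ ⊆ W^s_{ε/2}(x)` into `Γ ⊆ W^s_ε(y)` for every `y ∈ Γ`. -/

open Set Metric

/-- The local stable set `W^s_δ(x)` of `f`. -/
def Ws {X : Type*} [MetricSpace X] (f : X → X) (δ : ℝ) (x : X) : Set X :=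
  {y : X | ∀ i : ℕ, dist (f^[i] x) (f^[i] y) ≤ δ}

theorem Ws_subset_Ws_add {X : Type*} [MetricSpace X] {f : X → X} {δ δ' : ℝ} {x y : X}
    (hy : y ∈ Ws f δ x) : Ws f δ' x ⊆ Ws f (δ + δ') y := fun z hz i =>
  calc dist (f^[i] y) (f^[i] z) ≤ dist (f^[i] x) (f^[i] y) + dist (f^[i] x) (f^[i] z) :=
        dist_triangle_left _ _ _
    _ ≤ δ + δ' := add_le_add (hy i) (hz i)

theorem Metric.exists_lt_dist_of_lt_diam {X : Type*} [PseudoMetricSpace X] {s : Set X} {a : ℝ}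
    (ha : 0 ≤ a) (h : a < diam s) : ∃ p ∈ s, ∃ q ∈ s, a < dist p q := by
  by_contra! hle
  exact h.not_ge (diam_le_of_forall_dist_le ha hle)

theorem exists_isClopen_mem_subset_of_connectedComponent_subset {Y : Type*}
    [TopologicalSpace Y] [T2Space Y] [CompactSpace Y] {x : Y} {U : Set Y} (hU : IsOpen U)
    (h : connectedComponent x ⊆ U) : ∃ V, IsClopen V ∧ x ∈ V ∧ V ⊆ U := by
  rw [connectedComponent_eq_iInter_isClopen] at h
  obtain ⟨t, ht⟩ := hU.isClosed_compl.isCompact.elim_finite_subfamily_closed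
    (fun s : { s : Set Y // IsClopen s ∧ x ∈ s } => s.1) (fun s => s.2.1.1)
    (disjoint_compl_left_iff_subset.2 h).eq_bot
  refine ⟨⋂ s ∈ t, s.1, isClopen_biInter_finset fun s _ => s.2.1,
    mem_iInter₂.2 fun s _ => s.2.2, ?_⟩
  rw [← disjoint_compl_left_iff_subset, disjoint_iff_inter_eq_empty]
  exact ht

/-- The boundary bumping theorem. -/
theorem not_connectedComponentIn_subset_of_not_subset {X : Type*} [TopologicalSpace X]
    [T2Space X] {Γ F U : Set X} (hΓ : IsCompact Γ) (hΓc : IsPreconnected Γ) (hF : IsClosed F)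
    (hU : IsOpen U) (hUF : U ⊆ F) {r : X} (hr : r ∈ Γ ∩ F) (hΓU : ¬ Γ ⊆ U) :
    ¬ connectedComponentIn (Γ ∩ F) r ⊆ U := by
  intro hCU
  set K := Γ ∩ F
  have : CompactSpace K := isCompact_iff_compactSpace.1 (hΓ.inter_right hF)
  -- components of a compact Hausdorff space are quasi-components
  obtain ⟨V, hV, hrV, hVU⟩ := exists_isClopen_mem_subset_of_connectedComponent_subset
    (x := ⟨r, hr⟩) (hU.preimage continuous_subtype_val) (by
      rw [← image_subset_iff, ← connectedComponentIn_eq_image hr]; exact hCU)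
  obtain ⟨O, hO, rfl⟩ := isOpen_induced_iff.1 hV.2
  set V' : Set X := (↑) '' (Subtype.val ⁻¹' O : Set K)
  have hV'c : IsClosed V' := (hV.1.isCompact.image continuous_subtype_val).isClosed
  have hV'OU : V' ⊆ O ∩ U := by
    rintro _ ⟨y, hyO, rfl⟩
    exact ⟨hyO, hVU hyO⟩
  -- `V'` is also open in `Γ`, because `U ⊆ F` makes `Γ ∩ O ∩ U` lie inside `K`
  have hdisj : Γ ∩ ((O ∩ U) ∩ V'ᶜ) = ∅ :=
    eq_empty_of_forall_notMem fun y ⟨hyΓ, ⟨hyO, hyU⟩, hyV⟩ => hyV ⟨⟨y, hyΓ, hUF hyU⟩, hyO, rfl⟩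
  rcases isPreconnected_iff_subset_of_disjoint.1 hΓc _ _ (hO.inter hU) hV'c.isOpen_compl
    (fun y _ => (em (y ∈ V')).imp (hV'OU ·) id) hdisj with h | h
  · exact hΓU (h.trans inter_subset_right)
  · exact h hr.1 ⟨⟨r, hr⟩, hrV, rfl⟩

theorem exists_isConnected_subset_closedBall_le_diam {X : Type*} [MetricSpace X] {Γ : Set X}
    (hΓ : IsCompact Γ) (hΓc : IsPreconnected Γ) {r w : X} (hr : r ∈ Γ) (hw : w ∈ Γ) {c : ℝ}
    (hc : 0 ≤ c) (hrw : c ≤ dist w r) :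
    ∃ A, r ∈ A ∧ IsCompact A ∧ IsConnected A ∧ A ⊆ Γ ∧ A ⊆ closedBall r c ∧
      c ≤ diam A ∧ diam A ≤ 2 * c := by
  have hrK : r ∈ Γ ∩ closedBall r c := ⟨hr, mem_closedBall_self hc⟩
  set C := connectedComponentIn (Γ ∩ closedBall r c) r
  obtain ⟨z, hzC, hz⟩ := not_subset.1 <|
    not_connectedComponentIn_subset_of_not_subset hΓ hΓc isClosed_closedBall isOpen_ball
      ball_subset_closedBall hrK fun h => (h hw).not_ge hrw
  have hCK : closure C ⊆ Γ ∩ closedBall r c :=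
    closure_minimal (connectedComponentIn_subset _ _) (hΓ.isClosed.inter isClosed_closedBall)
  have hCc : IsCompact (closure C) :=
    hΓ.of_isClosed_subset isClosed_closure (hCK.trans inter_subset_left)
  have hrC : r ∈ closure C := subset_closure (mem_connectedComponentIn hrK)
  refine ⟨closure C, hrC, hCc, (isConnected_connectedComponentIn_iff.2 hrK).closure,
    hCK.trans inter_subset_left, hCK.trans inter_subset_right, ?_, ?_⟩
  · calc c ≤ dist z r := not_lt.1 hz
      _ ≤ diam (closure C) := dist_le_diam_of_mem hCc.isBounded (subset_closure hzC) hrC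
  · exact (diam_mono (hCK.trans inter_subset_right) isBounded_closedBall).trans
      (diam_closedBall hc)

theorem stmt13_general {X : Type*} [MetricSpace X] (f : X ≃ₜ X)
    (c ε : ℝ) (hc : 0 < c)
    (x : X) (Γ : Set X) (hcomp : IsCompact Γ) (hconn : IsConnected Γ)
    (hsub : Γ ⊆ Ws (⇑f) (ε / 2) x) (hdiam : 6 * c ≤ Metric.diam Γ) :
    ∃ α β : X, ∃ Γα Γβ : Set X,
      α ∈ Γ ∧ β ∈ Γ ∧ α ∈ Γα ∧ β ∈ Γβ ∧
      IsCompact Γα ∧ IsConnected Γα ∧ IsCompact Γβ ∧ IsConnected Γβ ∧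
      Γα ⊆ Γ ∧ Γβ ⊆ Γ ∧
      (∀ g ∈ Γα, ∀ h ∈ Γβ, c / 2 < dist g h) ∧
      Γα ⊆ Ws (⇑f) ε α ∧ Γβ ⊆ Ws (⇑f) ε β ∧
      c ≤ Metric.diam Γα ∧ Metric.diam Γα ≤ 2 * c ∧
      c ≤ Metric.diam Γβ ∧ Metric.diam Γβ ≤ 2 * c := by
  obtain ⟨p, hp, q, hq, hpq⟩ := exists_lt_dist_of_lt_diam (by positivity : 0 ≤ 3 * c)
    (by linarith)
  obtain ⟨A, hpA, hAc, hAconn, hAΓ, hAball, hA₁, hA₂⟩ :=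
    exists_isConnected_subset_closedBall_le_diam hcomp hconn.isPreconnected hp hq hc.le
      (by rw [dist_comm]; linarith)
  obtain ⟨B, hqB, hBc, hBconn, hBΓ, hBball, hB₁, hB₂⟩ :=
    exists_isConnected_subset_closedBall_le_diam hcomp hconn.isPreconnected hq hp hc.le
      (by linarith)
  have hWs : ∀ y ∈ Γ, Γ ⊆ Ws f ε y := fun y hy => by
    simpa only [add_halves] using hsub.trans (Ws_subset_Ws_add (hsub hy))
  refine ⟨p, q, A, B, hp, hq, hpA, hqB, hAc, hAconn, hBc, hBconn, hAΓ, hBΓ, ?_,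
    hAΓ.trans (hWs p hp), hBΓ.trans (hWs q hq), hA₁, hA₂, hB₁, hB₂⟩
  intro g hg h hh
  have := dist_triangle4 p g h q
  have := mem_closedBall'.1 (hAball hg)
  have := mem_closedBall.1 (hBball hh)
  linarith

/-- Splitting a large connected piece of a local stable set into two well-separated
connected pieces of controlled diameter. -/
theorem stmt13 {X : Type*} [MetricSpace X] [CompactSpace X] (f : X ≃ₜ X)
    (e : ℝ) (he : 0 < e)
    (hexp : ∀ x y : X,
      (∀ n : ℤ, dist ((f.toEquiv ^ n) x) ((f.toEquiv ^ n) y) ≤ e) → x = y)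
    (c ε : ℝ) (hc : 0 < c) (hε : 0 < ε) (h4c : 4 * c < ε)
    (x : X) (Γ : Set X) (hcomp : IsCompact Γ) (hconn : IsConnected Γ)
    (hsub : Γ ⊆ Ws (⇑f) (ε / 2) x) (hxΓ : x ∈ Γ) (hdiam : 6 * c ≤ Metric.diam Γ) :
    ∃ α β : X, ∃ Γα Γβ : Set X,
      α ∈ Γ ∧ β ∈ Γ ∧ α ∈ Γα ∧ β ∈ Γβ ∧
      IsCompact Γα ∧ IsConnected Γα ∧ IsCompact Γβ ∧ IsConnected Γβ ∧
      Γα ⊆ Γ ∧ Γβ ⊆ Γ ∧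
      (∀ g ∈ Γα, ∀ h ∈ Γβ, c / 2 < dist g h) ∧
      Γα ⊆ Ws (⇑f) ε α ∧ Γβ ⊆ Ws (⇑f) ε β ∧
      c ≤ Metric.diam Γα ∧ Metric.diam Γα ≤ 2 * c ∧
      c ≤ Metric.diam Γβ ∧ Metric.diam Γβ ≤ 2 * c :=
  stmt13_general f c ε hc x Γ hcomp hconn hsub hdiam
end

section
/- Let G be a topological group, τ : G → G a bicontinuous automorphism, and H a closed normal subgroup with τ(H) = H. If the system (G,τ) is pseudo-minimal, then the induced automorphism on the quotient group G/H is also pseudo-minimal. -/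
/-!
Pseudo-minimality descends to `G ⧸ H`: take `V` to be the image of the open set `U` of points
with dense orbit; `V` is open because the quotient map is open. If `g` lies over a point of `V`,
then `g = u * h` with `u ∈ U` and `h ∈ H`. The automorphisms stabilizing `H` form a subgroup, so
every power of `τ` preserves `H`, and hence the orbits of `g` and `u` have the same image in `G ⧸ H`. That image is dense,
being the image of a dense set under a continuous surjection.
-/

open Pointwise

namespace QuotientGroup

variable {G : Type*} [Group G] {H : Subgroup G}

theorem mk_apply_eq_of_mk_eq {σ : MulAut G} (hσ : σ • H = H) {g u : G}
    (h : (g : G ⧸ H) = u) : ((σ g : G) : G ⧸ H) = σ u := by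
  rw [QuotientGroup.eq] at h ⊢
  rw [← map_inv, ← map_mul, ← MulAut.smul_def, ← hσ]
  exact Subgroup.smul_mem_pointwise_smul _ _ _ h

theorem image_mk_zpow_orbit_eq_of_mk_eq {σ : MulAut G}
    (hσ : σ ∈ MulAction.stabilizer (MulAut G) H) {g u : G} (h : (g : G ⧸ H) = u) :
    ((↑) : G → G ⧸ H) '' Set.range (fun n : ℤ => (σ ^ n) g) =
      ((↑) : G → G ⧸ H) '' Set.range (fun n : ℤ => (σ ^ n) u) := by
  simp only [← Set.range_comp, Function.comp_def]
  congr 1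
  funext n
  exact mk_apply_eq_of_mk_eq (Subgroup.zpow_mem _ hσ n) h

end QuotientGroup

theorem MulAut.mem_stabilizer_subgroup_iff {G : Type*} [Group G] {σ : MulAut G}
    {H : Subgroup G} : σ ∈ MulAction.stabilizer (MulAut G) H ↔ σ '' (H : Set G) = H := by
  rw [MulAction.mem_stabilizer_iff, ← SetLike.coe_set_eq, Subgroup.coe_pointwise_smul]
  rfl

open Topology

theorem stmt14_general {G : Type*} [TopologicalSpace G] [Group G] [IsTopologicalGroup G]
    (τ : G ≃ₜ G) (hτ : ∀ a b : G, τ (a * b) = τ a * τ b)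
    (H : Subgroup G)
    (hHinv : τ '' (H : Set G) = (H : Set G))
    (hpm : ∃ U : Set G, IsOpen U ∧ U.Nonempty ∧
      ∀ g ∈ U, Dense (Set.range fun n : ℤ => (τ.toEquiv ^ n) g)) :
    ∃ V : Set (G ⧸ H), IsOpen V ∧ V.Nonempty ∧
      ∀ g : G, (g : G ⧸ H) ∈ V →
        Dense ((QuotientGroup.mk : G → G ⧸ H) ''
          (Set.range fun n : ℤ => (τ.toEquiv ^ n) g)) := by
  obtain ⟨U, hUopen, hUne, hUdense⟩ := hpm
  let σ : MulAut G := MulEquiv.mk' τ.toEquiv hτ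
  have hσH : σ ∈ MulAction.stabilizer (MulAut G) H := MulAut.mem_stabilizer_subgroup_iff.2 hHinv
  have hpow (n : ℤ) : ⇑(τ.toEquiv ^ n) = ⇑(σ ^ n) := by
    rw [show τ.toEquiv = MulAut.toPerm G σ from rfl, ← map_zpow]
    rfl
  simp only [hpow] at hUdense ⊢
  refine ⟨(↑) '' U, QuotientGroup.isOpenMap_coe U hUopen, hUne.image _, ?_⟩
  rintro g ⟨u, hu, hug⟩
  rw [QuotientGroup.image_mk_zpow_orbit_eq_of_mk_eq hσH hug.symm]
  exact QuotientGroup.mk_surjective.denseRange.dense_image continuous_quotient_mk' (hUdense u hu)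

/-- If `τ` is a bicontinuous automorphism of a topological group `G`, `H` a closed
normal `τ`-invariant subgroup, and `(G, τ)` is pseudo-minimal, then the induced
automorphism of `G ⧸ H` is pseudo-minimal. -/
theorem stmt14 {G : Type*} [TopologicalSpace G] [Group G] [IsTopologicalGroup G]
    (τ : G ≃ₜ G) (hτ : ∀ a b : G, τ (a * b) = τ a * τ b)
    (H : Subgroup G) [H.Normal] (hHclosed : IsClosed (H : Set G))
    (hHinv : τ '' (H : Set G) = (H : Set G))
    (hpm : ∃ U : Set G, IsOpen U ∧ U.Nonempty ∧
      ∀ g ∈ U, Dense (Set.range fun n : ℤ => (τ.toEquiv ^ n) g)) :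
    ∃ V : Set (G ⧸ H), IsOpen V ∧ V.Nonempty ∧
      ∀ g : G, (g : G ⧸ H) ∈ V →
        Dense ((QuotientGroup.mk : G → G ⧸ H) ''
          (Set.range fun n : ℤ => (τ.toEquiv ^ n) g)) :=
  stmt14_general τ hτ H hHinv hpm
end

section
/- Let X be a compact connected abelian topological group, T(x) = a + τ(x) an affine transformation (τ an automorphism), and β(x) = τ(x) - x. If T has a dense orbit, then the closed subgroup generated by the closure of {na : n ∈ ℤ} together with β(X) is all of X. -/
/-!
Since `T y - y = a + β y`, every step of `T` stays inside a coset of the closed subgroup `S` in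
question, so the `T`-orbit of `x` lies in the closed coset `x + S`; a dense orbit forces `S = X`.
-/

namespace Equiv.Perm

variable {G : Type*} [AddCommGroup G] {H : AddSubgroup G} {f : Equiv.Perm G}

theorem zpow_apply_sub_mem (hf : ∀ y, f y - y ∈ H) (n : ℤ) (y : G) : (f ^ n) y - y ∈ H := by
  induction n using Int.induction_on generalizing y with
  | zero => simp
  | succ n ih =>
    rw [zpow_add_one, Perm.mul_apply, ← sub_add_sub_cancel _ (f y)]
    exact H.add_mem (ih _) (hf y)
  | pred n ih =>
    have hinv : f⁻¹ y - y ∈ H := by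
      simpa using H.neg_mem (hf (f⁻¹ y))
    rw [zpow_sub_one, Perm.mul_apply, ← sub_add_sub_cancel _ (f⁻¹ y)]
    exact H.add_mem (ih _) hinv

end Equiv.Perm

theorem AddSubgroup.eq_top_of_dense_zpow_orbit {G : Type*} [AddCommGroup G] [TopologicalSpace G]
    [ContinuousSub G] {H : AddSubgroup G} (hH : IsClosed (H : Set G)) {f : Equiv.Perm G}
    (hf : ∀ y, f y - y ∈ H) {x : G} (hx : Dense (Set.range fun n : ℤ => (f ^ n) x)) :
    H = ⊤ := by
  have horbit : Set.range (fun n : ℤ => (f ^ n) x) ⊆ (· - x) ⁻¹' (H : Set G) := by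
    rintro _ ⟨n, rfl⟩
    exact f.zpow_apply_sub_mem hf n x
  have hcoset : (· - x) ⁻¹' (H : Set G) = Set.univ :=
    (hH.preimage (continuous_sub_right x)).closure_eq ▸ (hx.mono horbit).closure_eq
  refine eq_top_iff.2 fun z _ => ?_
  simpa using hcoset.symm.subset (Set.mem_univ (z + x))

theorem stmt17_general {X : Type*} [TopologicalSpace X] [AddCommGroup X]
    [IsTopologicalAddGroup X]
    (τ : X ≃ₜ X) (a : X)
    (T : X ≃ₜ X) (hT : ∀ x : X, T x = a + τ x)
    (hdense : ∃ x : X, Dense (Set.range fun n : ℤ => (T.toEquiv ^ n) x)) :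
    (AddSubgroup.closure
        (closure (Set.range fun n : ℤ => n • a) ∪
          Set.range fun x : X => τ x - x)).topologicalClosure = ⊤ := by
  obtain ⟨x, hx⟩ := hdense
  set S := (AddSubgroup.closure
      (closure (Set.range fun n : ℤ => n • a) ∪ Set.range fun x : X => τ x - x)).topologicalClosure
  have hgen : closure (Set.range fun n : ℤ => n • a) ∪ Set.range (fun x : X => τ x - x) ⊆ S :=
    fun y hy => AddSubgroup.le_topologicalClosure _ (AddSubgroup.subset_closure hy)
  have ha : a ∈ S := hgen (Or.inl (subset_closure ⟨1, one_zsmul a⟩))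
  have hstep : ∀ y, T.toEquiv y - y ∈ S := fun y => by
    rw [Homeomorph.coe_toEquiv, hT, add_sub_assoc]
    exact S.add_mem ha (hgen (Or.inr ⟨y, rfl⟩))
  exact AddSubgroup.eq_top_of_dense_zpow_orbit (AddSubgroup.isClosed_topologicalClosure _) hstep hx

/-- If the affine transformation `T x = a + τ x` of a compact connected abelian group
has a dense orbit, then the closed subgroup generated by the closure of `{n • a}`
together with `β(X)`, where `β x = τ x - x`, is the whole group. -/
theorem stmt17 {X : Type*} [TopologicalSpace X] [AddCommGroup X]
    [IsTopologicalAddGroup X] [CompactSpace X] [ConnectedSpace X]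
    (τ : X ≃ₜ X) (hτ : ∀ a b : X, τ (a + b) = τ a + τ b) (a : X)
    (T : X ≃ₜ X) (hT : ∀ x : X, T x = a + τ x)
    (hdense : ∃ x : X, Dense (Set.range fun n : ℤ => (T.toEquiv ^ n) x)) :
    (AddSubgroup.closure
        (closure (Set.range fun n : ℤ => n • a) ∪
          Set.range fun x : X => τ x - x)).topologicalClosure = ⊤ :=
  stmt17_general τ a T hT hdense
end
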